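/- For r = 1/2 the analytically continued r-Stirling numbers relate to the B-analogues of Stirling numbers by: 2^{n−k} · c_{1/2}(n+1/2, k+1/2) = B(n,k) and 2^{n−k} · S_{1/2}(n+1/2, k+1/2) = S_B(n,k), where the half-integer r-Stirling numbers are defined by c_r(n+r,k+r) = Σ_{m=0}^{n−k} binom(n,m) c(n−m,k) r^{(m)} and S_r(n+r,k+r) = Σ_{m=k}^{n} binom(n,m) S(m,k) r^{n−m} with r = 1/2 (as rational numbers). -/

import Mathlib

/-- The unsigned Stirling numbers of the first kind. -/
def stirling1 : ℕ → ℕ → ℕ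
  | 0, 0 => 1
  | 0, _ + 1 => 0
  | _ + 1, 0 => 0
  | n + 1, k + 1 => n * stirling1 n (k + 1) + stirling1 n k

/-- The Stirling numbers of the second kind. -/
def stirling2 : ℕ → ℕ → ℕ
  | 0, 0 => 1
  | 0, _ + 1 => 0
  | _ + 1, 0 => 0
  | n + 1, k + 1 => (k + 1) * stirling2 n (k + 1) + stirling2 n k

/-- The `B`-analogues of the Stirling numbers of the first kind, defined via the
recursion corresponding to `(t+1)(t+3)⋯(t+2n-1) = ∑ₖ B(n,k) tᵏ`. -/
def stirlingB1 : ℕ → ℕ → ℕ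
  | 0, 0 => 1
  | 0, _ + 1 => 0
  | n + 1, 0 => (2 * n + 1) * stirlingB1 n 0
  | n + 1, k + 1 => (2 * n + 1) * stirlingB1 n (k + 1) + stirlingB1 n k

/-- The `B`-analogue of the Stirling numbers of the second kind:
`S_B(n,k) = Σ_{m=k}^{n} 2^{m−k} · binom(n,m) · S(m,k)`. -/
def stirlingB2 (n k : ℕ) : ℕ :=
  ∑ m ∈ Finset.Icc k n, 2 ^ (m - k) * n.choose m * stirling2 m k

/-- The analytically continued `r`-Stirling number of the first kind with `r = 1/2`:
`c_{1/2}(n+1/2, k+1/2) = Σ_{m=0}^{n−k} binom(n,m) c(n−m,k) (1/2)^{(m)}`,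
where `(1/2)^{(m)}` is the rising factorial. -/
def halfStirling1 (n k : ℕ) : ℚ :=
  ∑ m ∈ Finset.range (n - k + 1),
    (n.choose m : ℚ) * (stirling1 (n - m) k : ℚ) * ∏ i ∈ Finset.range m, ((1 : ℚ) / 2 + i)

/-- The analytically continued `r`-Stirling number of the second kind with `r = 1/2`:
`S_{1/2}(n+1/2, k+1/2) = Σ_{m=k}^{n} binom(n,m) S(m,k) (1/2)^{n−m}`. -/
def halfStirling2 (n k : ℕ) : ℚ :=
  ∑ m ∈ Finset.Icc k n, (n.choose m : ℚ) * (stirling2 m k : ℚ) * ((1 : ℚ) / 2) ^ (n - m)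

/-! For any `r`, the sums `c_r(n+r,k+r)` satisfy the triangular recurrence
`c_r(n+1+r,k+1+r) = (n+r) c_r(n+r,k+1+r) + c_r(n+r,k+r)`: split `binom(n+1,m)` by Pascal's rule
and use `c(j+1,k+1) = j c(j,k+1) + c(j,k)` and `r^{(i+1)} = r^{(i)} (r+i)`, the factors adding up
to `j + r + i = n + r`. For `r = 1/2`, scaling by powers of `2` turns `n + 1/2` into `2n+1`, the
recurrence of `B(n,k)`. The second identity holds term by term, as
`2^{n-k} (1/2)^{n-m} = 2^{m-k}`. -/

open Finset Nat Polynomial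

theorem stirling1_eq_stirlingFirst : stirling1 = stirlingFirst := by
  funext n k
  induction n generalizing k with
  | zero => cases k <;> rfl
  | succ n ih =>
    cases k with
    | zero => rfl
    | succ k => rw [stirlingFirst_succ_succ, ← ih, ← ih]; rfl

theorem stirlingB1_eq_zero_of_lt {n k : ℕ} (h : n < k) : stirlingB1 n k = 0 := by
  induction n generalizing k with
  | zero => obtain ⟨k, rfl⟩ := Nat.exists_eq_succ_of_ne_zero h.ne'; rfl
  | succ n ih =>
    obtain ⟨k, rfl⟩ := Nat.exists_eq_succ_of_ne_zero (Nat.ne_zero_of_lt h)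
    simp only [stirlingB1, ih (by omega : n < k + 1), ih (by omega : n < k), mul_zero, add_zero]

theorem ascPochhammer_eval_eq_prod_range {R : Type*} [CommSemiring R] (n : ℕ) (r : R) :
    (ascPochhammer R n).eval r = ∏ j ∈ range n, (r + j) := by
  induction n with
  | zero => simp
  | succ n ih => rw [ascPochhammer_succ_eval, ih, prod_range_succ]

section rStirling

variable {R : Type*} [CommSemiring R]

/-- `rStirlingFirst r n k` is `c_r(n+r,k+r)`, summed over all `m ≤ n`; the terms with
`m > n - k` vanish. -/
noncomputable def rStirlingFirst (r : R) (n k : ℕ) : R :=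
  ∑ m ∈ range (n + 1), (n.choose m : R) * (stirlingFirst (n - m) k : R) * (ascPochhammer R m).eval r

theorem rStirlingFirst_zero_left (r : R) (k : ℕ) : rStirlingFirst r 0 k = stirlingFirst 0 k := by
  simp [rStirlingFirst]

theorem rStirlingFirst_zero_right (r : R) (n : ℕ) :
    rStirlingFirst r n 0 = (ascPochhammer R n).eval r := by
  rw [rStirlingFirst, sum_range_succ, sum_eq_zero fun m hm => ?_]
  · simp
  · obtain ⟨j, hj⟩ := Nat.exists_eq_add_of_lt (mem_range.mp hm)
    simp [hj, show m + j + 1 - m = j + 1 by omega]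

theorem rStirlingFirst_succ_succ (r : R) (n k : ℕ) :
    rStirlingFirst r (n + 1) (k + 1) =
      (n + r) * rStirlingFirst r n (k + 1) + rStirlingFirst r n k := by
  have pascal := sum_choose_succ_mul
    (fun i j => (stirlingFirst j (k + 1) : R) * (ascPochhammer R i).eval r) n
  simp only [← mul_assoc] at pascal
  rw [rStirlingFirst, pascal, rStirlingFirst, rStirlingFirst, mul_sum, ← sum_add_distrib,
    ← sum_add_distrib]
  refine sum_congr rfl fun i hi => ?_
  obtain ⟨j, rfl⟩ := Nat.exists_eq_add_of_le (Nat.lt_succ_iff.mp (mem_range.mp hi))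
  rw [show i + j + 1 - i = j + 1 by omega, Nat.add_sub_cancel_left, stirlingFirst_succ_succ,
    ascPochhammer_succ_eval]
  push_cast
  ring

end rStirling

theorem halfStirling1_eq_rStirlingFirst (n k : ℕ) :
    halfStirling1 n k = rStirlingFirst (1 / 2 : ℚ) n k := by
  rw [halfStirling1, rStirlingFirst, stirling1_eq_stirlingFirst]
  refine (sum_subset (range_subset_range.mpr (by omega)) fun m hm hm' => ?_).trans
    (sum_congr rfl fun m _ => ?_)
  · rw [mem_range] at hm hm'
    rw [stirlingFirst_eq_zero_of_lt (by omega), cast_zero, mul_zero, zero_mul]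
  · rw [ascPochhammer_eval_eq_prod_range]

theorem two_pow_mul_rStirlingFirst_half (n k : ℕ) :
    2 ^ n * rStirlingFirst (1 / 2 : ℚ) n k = 2 ^ k * stirlingB1 n k := by
  induction n generalizing k with
  | zero => cases k <;> simp [rStirlingFirst_zero_left, stirlingB1]
  | succ n ih =>
    cases k with
    | zero =>
      have h := ih 0
      rw [rStirlingFirst_zero_right] at h ⊢
      rw [stirlingB1, ascPochhammer_succ_eval]
      push_cast
      linear_combination (2 * n + 1 : ℚ) * h
    | succ k =>
      rw [rStirlingFirst_succ_succ, stirlingB1]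
      push_cast
      linear_combination (2 * n + 1 : ℚ) * ih (k + 1) + 2 * ih k

theorem two_pow_sub_mul_halfStirling1 (n k : ℕ) :
    (2 : ℚ) ^ (n - k) * halfStirling1 n k = stirlingB1 n k := by
  have scaled := two_pow_mul_rStirlingFirst_half n k
  rw [← halfStirling1_eq_rStirlingFirst] at scaled
  rcases le_or_gt k n with hkn | hnk
  · refine mul_left_cancel₀ (pow_ne_zero k two_ne_zero) ?_
    rw [← mul_assoc, ← pow_add, Nat.add_sub_cancel' hkn, scaled]
  · rw [stirlingB1_eq_zero_of_lt hnk, cast_zero, mul_zero] at scaled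
    rw [stirlingB1_eq_zero_of_lt hnk]
    simpa using scaled

theorem two_pow_sub_mul_halfStirling2 (n k : ℕ) :
    (2 : ℚ) ^ (n - k) * halfStirling2 n k = stirlingB2 n k := by
  rw [halfStirling2, stirlingB2, mul_sum]
  push_cast
  refine sum_congr rfl fun m hm => ?_
  obtain ⟨hkm, hmn⟩ := mem_Icc.mp hm
  rw [show n - k = (m - k) + (n - m) by omega, pow_add, one_div, inv_pow]
  field_simp

theorem halfStirling_eq_stirlingB (n k : ℕ) :
    (2 : ℚ) ^ (n - k) * halfStirling1 n k = (stirlingB1 n k : ℚ) ∧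
    (2 : ℚ) ^ (n - k) * halfStirling2 n k = (stirlingB2 n k : ℚ) :=
  ⟨two_pow_sub_mul_halfStirling1 n k, two_pow_sub_mul_halfStirling2 n k⟩
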